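/- arXiv:2005.02625 — 5 statements merged into one kernel-verified Lean document; each statement's English description precedes it below -/
import Mathlib

section
/- Let Φ be a simply laced root system with all roots of squared length 2, α ∈ Φ and λ ∈ Λ_i for some -2 ≤ i ≤ 2. Then there exists β ∈ Φ with α + β = λ if and only if κ(α,λ) = 2+i. -/
/-!
For roots of squared length 2 the integer `⟪α, γ⟫` is at most 2, with equality only for
`α = γ`, and the reflection in `α` sends `γ` to `γ ∓ α` when `⟪γ, α⟫ = ±1`. For `λ = γ + δ` the
condition `⟪α, λ⟫ = 2 + ⟪γ, δ⟫` forces `⟪α, γ⟫` or `⟪α, δ⟫` to be positive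
unless `λ = 0`. If `⟪α, γ⟫ = 2` then `α = γ`; if `⟪α, γ⟫ = 1` then `γ - α` is a root with
`⟪δ, γ - α⟫ = -1`, so `β = δ + (γ - α)` is a root. Conversely `α + β = γ + δ` gives
`⟪α, β⟫ = ⟪γ, δ⟫` by comparing squared lengths.
-/

open scoped RealInnerProductSpace

section

variable {V : Type*} [NormedAddCommGroup V] [InnerProductSpace ℝ V]

theorem real_inner_eq_of_add_eq_add {α β γ δ : V} (h : α + β = γ + δ)
    (hn : ⟪α, α⟫ + ⟪β, β⟫ = ⟪γ, γ⟫ + ⟪δ, δ⟫) : ⟪α, β⟫ = ⟪γ, δ⟫ := by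
  have hsq : ⟪α + β, α + β⟫ = ⟪γ + δ, γ + δ⟫ := by rw [h]
  simp only [inner_add_left, inner_add_right, real_inner_comm α β, real_inner_comm γ δ] at hsq
  linarith

theorem real_inner_sub_self_of_inner_self_eq_two {α γ : V} (hα : ⟪α, α⟫ = 2) (hγ : ⟪γ, γ⟫ = 2) :
    ⟪α - γ, α - γ⟫ = 4 - 2 * ⟪α, γ⟫ := by
  simp only [inner_sub_left, inner_sub_right, real_inner_comm α γ]
  linarith

theorem real_inner_le_two_of_inner_self_eq_two {α γ : V} (hα : ⟪α, α⟫ = 2) (hγ : ⟪γ, γ⟫ = 2) :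
    ⟪α, γ⟫ ≤ 2 := by
  have := real_inner_sub_self_of_inner_self_eq_two hα hγ
  linarith [real_inner_self_nonneg (x := α - γ)]

theorem eq_of_inner_eq_two {α γ : V} (hα : ⟪α, α⟫ = 2) (hγ : ⟪γ, γ⟫ = 2) (h : ⟪α, γ⟫ = 2) :
    α = γ := by
  have := real_inner_sub_self_of_inner_self_eq_two hα hγ
  exact sub_eq_zero.mp (inner_self_eq_zero (𝕜 := ℝ) |>.mp (by linarith))

theorem exists_add_eq_add_of_inner_nonpos {Φ : Set V} (hneg : ∀ α ∈ Φ, -α ∈ Φ) {α γ δ : V}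
    (hα : α ∈ Φ) (hγ : ⟪γ, γ⟫ = 2) (hδ : ⟪δ, δ⟫ = 2) (hαγ : ⟪α, γ⟫ ≤ 0) (hαδ : ⟪α, δ⟫ ≤ 0)
    (hsum : ⟪α, γ + δ⟫ = 2 + ⟪γ, δ⟫) : ∃ β ∈ Φ, α + β = γ + δ := by
  have hzero : γ + δ = 0 := by
    refine inner_self_eq_zero.mp (le_antisymm ?_ real_inner_self_nonneg)
    simp only [inner_add_left, inner_add_right, real_inner_comm δ γ] at hsum ⊢
    linarith
  exact ⟨-α, hneg α hα, by rw [hzero, add_neg_cancel]⟩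

variable {Φ : Set V} (hrefl : ∀ α ∈ Φ, ∀ β ∈ Φ, β - ⟪β, α⟫ • α ∈ Φ)
include hrefl

theorem sub_mem_of_inner_eq_one {α β : V} (hα : α ∈ Φ) (hβ : β ∈ Φ) (h : ⟪β, α⟫ = 1) :
    β - α ∈ Φ := by
  simpa [h] using hrefl α hα β hβ

theorem add_mem_of_inner_eq_neg_one {α β : V} (hα : α ∈ Φ) (hβ : β ∈ Φ) (h : ⟪β, α⟫ = -1) :
    β + α ∈ Φ := by
  simpa [h] using hrefl α hα β hβ

theorem exists_add_eq_add_of_one_le_inner {α γ δ : V} (hα : α ∈ Φ) (hγ : γ ∈ Φ) (hδ : δ ∈ Φ)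
    (hαα : ⟪α, α⟫ = 2) (hγγ : ⟪γ, γ⟫ = 2) {n : ℤ} (hn : ⟪α, γ⟫ = n) (h1 : 1 ≤ n)
    (hsum : ⟪α, γ + δ⟫ = 2 + ⟪γ, δ⟫) : ∃ β ∈ Φ, α + β = γ + δ := by
  have hn2 : n ≤ 2 := by exact_mod_cast hn ▸ real_inner_le_two_of_inner_self_eq_two hαα hγγ
  obtain rfl | rfl : n = 1 ∨ n = 2 := by omega
  · have hγα : γ - α ∈ Φ := sub_mem_of_inner_eq_one hrefl hα hγ (by rw [real_inner_comm, hn]; simp)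
    have hδ' : ⟪δ, γ - α⟫ = -1 := by
      rw [inner_add_right, hn] at hsum
      rw [inner_sub_right, real_inner_comm γ δ, real_inner_comm α δ]
      push_cast at hsum
      linarith
    exact ⟨δ + (γ - α), add_mem_of_inner_eq_neg_one hrefl hγα hδ hδ', by abel⟩
  · obtain rfl := eq_of_inner_eq_two hαα hγγ (by rw [hn]; simp)
    exact ⟨δ, hδ, rfl⟩

end

theorem exists_root_summand_iff_general (V : Type*) [NormedAddCommGroup V]
    [InnerProductSpace ℝ V]
    (Φ : Finset V)
    (hlen : ∀ α ∈ Φ, ⟪α, α⟫ = 2)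
    (hneg : ∀ α ∈ Φ, -α ∈ Φ)
    (hint : ∀ α ∈ Φ, ∀ β ∈ Φ, ∃ n : ℤ, ⟪α, β⟫ = n)
    (hrefl : ∀ α ∈ Φ, ∀ β ∈ Φ, β - ⟪β, α⟫ • α ∈ Φ)
    (α : V) (hα : α ∈ Φ)
    (i : ℤ)
    (lam : V) (hlam : ∃ γ ∈ Φ, ∃ δ ∈ Φ, ⟪γ, δ⟫ = (i : ℝ) ∧ lam = γ + δ) :
    (∃ β ∈ Φ, α + β = lam) ↔ ⟪α, lam⟫ = 2 + (i : ℝ) := by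
  obtain ⟨γ, hγ, δ, hδ, hγδ, rfl⟩ := hlam
  rw [← hγδ]
  constructor
  · rintro ⟨β, hβ, hsum⟩
    have hnorm : ⟪α, α⟫ + ⟪β, β⟫ = ⟪γ, γ⟫ + ⟪δ, δ⟫ := by simp only [hlen, hα, hβ, hγ, hδ]
    rw [← hsum, ← real_inner_eq_of_add_eq_add hsum hnorm, inner_add_right, hlen α hα]
  · intro hsum
    obtain ⟨m, hm⟩ := hint α hα γ hγ
    obtain ⟨n, hn⟩ := hint α hα δ hδ
    rcases le_or_gt 1 m with hm1 | hm1
    · exact exists_add_eq_add_of_one_le_inner hrefl hα hγ hδ (hlen α hα) (hlen γ hγ) hm hm1 hsum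
    rcases le_or_gt 1 n with hn1 | hn1
    · rw [add_comm γ, ← real_inner_comm γ δ] at hsum
      rw [add_comm γ]
      exact exists_add_eq_add_of_one_le_inner hrefl hα hδ hγ (hlen α hα) (hlen δ hδ) hn hn1 hsum
    have hm0 : ⟪α, γ⟫ ≤ 0 := by rw [hm]; exact_mod_cast Int.lt_add_one_iff.mp hm1
    have hn0 : ⟪α, δ⟫ ≤ 0 := by rw [hn]; exact_mod_cast Int.lt_add_one_iff.mp hn1
    exact exists_add_eq_add_of_inner_nonpos hneg hα (hlen γ hγ) (hlen δ hδ) hm0 hn0 hsum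

/-- In an irreducible simply laced root system (roots of squared length 2),
for a root `α` and `λ ∈ Λ_i` (`-2 ≤ i ≤ 2`), there exists a root `β` with
`α + β = λ` if and only if `κ(α,λ) = 2 + i`. -/
theorem exists_root_summand_iff (V : Type*) [NormedAddCommGroup V]
    [InnerProductSpace ℝ V] [FiniteDimensional ℝ V]
    (Φ : Finset V)
    (h0 : (0 : V) ∉ Φ)
    (hlen : ∀ α ∈ Φ, ⟪α, α⟫ = 2)
    (hneg : ∀ α ∈ Φ, -α ∈ Φ)
    (hred : ∀ α ∈ Φ, ∀ t : ℝ, t • α ∈ Φ → t = 1 ∨ t = -1)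
    (hint : ∀ α ∈ Φ, ∀ β ∈ Φ, ∃ n : ℤ, ⟪α, β⟫ = n)
    (hrefl : ∀ α ∈ Φ, ∀ β ∈ Φ, β - ⟪β, α⟫ • α ∈ Φ)
    (α : V) (hα : α ∈ Φ)
    (i : ℤ) (hi₁ : -2 ≤ i) (hi₂ : i ≤ 2)
    (lam : V) (hlam : ∃ γ ∈ Φ, ∃ δ ∈ Φ, ⟪γ, δ⟫ = (i : ℝ) ∧ lam = γ + δ) :
    (∃ β ∈ Φ, α + β = lam) ↔ ⟪α, lam⟫ = 2 + (i : ℝ) :=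
  exists_root_summand_iff_general V Φ hlen hneg hint hrefl α hα i lam hlam
end

section
/- Let Φ be a simply laced root system and λ a sum of two orthogonal roots (λ ∈ Λ_0). Then n_λ ≥ 2, i.e., there are at least two distinct unordered pairs {α,β} of roots with α+β = λ. -/
/-!
Irreducibility makes the graph "non-orthogonal" on `Φ` connected, and reflecting along a path
shows that any two orthogonal roots `α`, `β` have a common non-orthogonal neighbour `γ`.
Reflections in `α` and in `β` flip the signs of `⟪γ, α⟫` and `⟪γ, β⟫` independently, so one may
take `⟪γ, α⟫ = ⟪γ, β⟫ = 1`. Then `γ - β` and `α - (γ - β)` are roots, so `{γ, α + β - γ}` is a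
second pair with sum `α + β`.
-/

open scoped RealInnerProductSpace

namespace RootPairs

variable {V : Type*} [NormedAddCommGroup V] [InnerProductSpace ℝ V]

lemma inner_eq_one_or_neg_one {x y : V} (hx : ⟪x, x⟫ = 2) (hy : ⟪y, y⟫ = 2) {n : ℤ}
    (hn : ⟪x, y⟫ = n) (hne : x ≠ y) (hne' : x ≠ -y) (h0 : ⟪x, y⟫ ≠ 0) :
    ⟪x, y⟫ = 1 ∨ ⟪x, y⟫ = -1 := by
  have hsub : 0 < ⟪x - y, x - y⟫ := real_inner_self_pos.mpr (sub_ne_zero.mpr hne)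
  have hadd : 0 < ⟪x + y, x + y⟫ :=
    real_inner_self_pos.mpr fun h => hne' (eq_neg_of_add_eq_zero_left h)
  simp only [inner_sub_left, inner_sub_right, inner_add_left, inner_add_right,
    real_inner_comm x y, hx, hy, hn] at hsub hadd
  have hn1 : n < 2 := by exact_mod_cast (by linarith : (n : ℝ) < 2)
  have hn2 : -2 < n := by exact_mod_cast (by linarith : (-2 : ℝ) < n)
  have hn0 : n ≠ 0 := by rintro rfl; simp [hn] at h0
  rcases (by omega : n = 1 ∨ n = -1) with rfl | rfl <;> simp [hn]

variable {Φ : Finset V}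

lemma forall_mem_of_closed_under_inner_ne_zero
    (hirr : ∀ S ⊆ Φ, (∀ a ∈ S, ∀ b ∈ Φ, b ∉ S → ⟪a, b⟫ = 0) → S = ∅ ∨ S = Φ)
    {P : V → Prop} {α : V} (hα : α ∈ Φ) (hPα : P α)
    (hP : ∀ a ∈ Φ, ∀ b ∈ Φ, ⟪a, b⟫ ≠ 0 → P a → P b) : ∀ b ∈ Φ, P b := by
  classical
  have hclosed : ∀ a ∈ Φ.filter P, ∀ b ∈ Φ, b ∉ Φ.filter P → ⟪a, b⟫ = 0 := by
    intro a ha b hb hbS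
    rw [Finset.mem_filter] at ha hbS
    by_contra hab
    exact hbS ⟨hb, hP a ha.1 b hb hab ha.2⟩
  rcases hirr _ (Finset.filter_subset P Φ) hclosed with h | h
  · exact absurd (Finset.mem_filter.mpr ⟨hα, hPα⟩) (h ▸ Finset.notMem_empty α)
  · intro b hb
    rw [← h] at hb
    exact (Finset.mem_filter.mp hb).2

section Reflections

variable (hrefl : ∀ α ∈ Φ, ∀ β ∈ Φ, β - ⟪β, α⟫ • α ∈ Φ)
include hrefl

lemma exists_inner_eq_one {α γ : V} (hα : α ∈ Φ) (hγ : γ ∈ Φ) (hαα : ⟪α, α⟫ = 2)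
    (hγα : ⟪γ, α⟫ = 1 ∨ ⟪γ, α⟫ = -1) :
    ∃ γ' ∈ Φ, ⟪γ', α⟫ = 1 ∧ ∀ β, ⟪α, β⟫ = 0 → ⟪γ', β⟫ = ⟪γ, β⟫ := by
  rcases hγα with h | h
  · exact ⟨γ, hγ, h, fun _ _ => rfl⟩
  · refine ⟨γ - ⟪γ, α⟫ • α, hrefl α hα γ hγ, ?_, fun β hαβ => ?_⟩
    · simp only [inner_sub_left, real_inner_smul_left, hαα, h]
      norm_num
    · simp [inner_sub_left, real_inner_smul_left, hαβ]

lemma add_sub_mem_of_inner_eq_one {α β γ : V} (hα : α ∈ Φ) (hβ : β ∈ Φ) (hγ : γ ∈ Φ)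
    (hαβ : ⟪α, β⟫ = 0) (hγα : ⟪γ, α⟫ = 1) (hγβ : ⟪γ, β⟫ = 1) : α + β - γ ∈ Φ := by
  have hγβ_mem : γ - β ∈ Φ := by simpa [hγβ] using hrefl β hβ γ hγ
  have hinner : ⟪α, γ - β⟫ = 1 := by rw [inner_sub_right, real_inner_comm, hγα, hαβ, sub_zero]
  have h := hrefl _ hγβ_mem α hα
  rwa [hinner, one_smul, sub_sub_eq_add_sub] at h

/-- In the only nontrivial case the witness for `a`, reflected in `a`, is a witness for `b`. -/
lemma inner_ne_zero_or_exists_of_inner_ne_zero {α a b : V} (ha : a ∈ Φ) (hab : ⟪a, b⟫ ≠ 0)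
    (h : ⟪a, α⟫ ≠ 0 ∨ ∃ γ ∈ Φ, ⟪γ, α⟫ ≠ 0 ∧ ⟪γ, a⟫ ≠ 0) :
    ⟪b, α⟫ ≠ 0 ∨ ∃ γ ∈ Φ, ⟪γ, α⟫ ≠ 0 ∧ ⟪γ, b⟫ ≠ 0 := by
  by_cases hbα : ⟪b, α⟫ ≠ 0
  · exact Or.inl hbα
  right
  by_cases haα : ⟪a, α⟫ ≠ 0
  · exact ⟨a, ha, haα, hab⟩
  obtain ⟨γ, hγ, hγα, hγa⟩ := h.resolve_left haα
  by_cases hγb : ⟪γ, b⟫ ≠ 0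
  · exact ⟨γ, hγ, hγα, hγb⟩
  push Not at hγb haα
  refine ⟨γ - ⟪γ, a⟫ • a, hrefl a ha γ hγ, ?_, ?_⟩
  · simpa [inner_sub_left, real_inner_smul_left, haα] using hγα
  · simpa [inner_sub_left, real_inner_smul_left, hγb] using mul_ne_zero hγa hab

lemma exists_inner_ne_zero_of_inner_eq_zero
    (hirr : ∀ S ⊆ Φ, (∀ a ∈ S, ∀ b ∈ Φ, b ∉ S → ⟪a, b⟫ = 0) → S = ∅ ∨ S = Φ)
    {α β : V} (hα : α ∈ Φ) (hβ : β ∈ Φ) (hαα : ⟪α, α⟫ ≠ 0) (hβα : ⟪β, α⟫ = 0) :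
    ∃ γ ∈ Φ, ⟪γ, α⟫ ≠ 0 ∧ ⟪γ, β⟫ ≠ 0 :=
  (forall_mem_of_closed_under_inner_ne_zero hirr hα (Or.inl hαα)
    (fun _ ha _ _ hab => inner_ne_zero_or_exists_of_inner_ne_zero hrefl ha hab)
    β hβ).resolve_left (not_not.mpr hβα)

end Reflections

end RootPairs

open RootPairs

theorem at_least_two_pairs_general (V : Type*) [NormedAddCommGroup V]
    [InnerProductSpace ℝ V]
    (Φ : Finset V)
    (hlen : ∀ α ∈ Φ, ⟪α, α⟫ = 2)
    (hint : ∀ α ∈ Φ, ∀ β ∈ Φ, ∃ n : ℤ, ⟪α, β⟫ = n)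
    (hrefl : ∀ α ∈ Φ, ∀ β ∈ Φ, β - ⟪β, α⟫ • α ∈ Φ)
    (hirr : ∀ S ⊆ Φ, (∀ a ∈ S, ∀ b ∈ Φ, b ∉ S → ⟪a, b⟫ = 0) → S = ∅ ∨ S = Φ)
    (lam : V) (hlam : ∃ α ∈ Φ, ∃ β ∈ Φ, ⟪α, β⟫ = 0 ∧ lam = α + β) :
    ∃ α ∈ Φ, ∃ β ∈ Φ, ∃ γ ∈ Φ, ∃ δ ∈ Φ,
      α + β = lam ∧ γ + δ = lam ∧ ({α, β} : Set V) ≠ ({γ, δ} : Set V) := by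
  obtain ⟨α, hα, β, hβ, hαβ, rfl⟩ := hlam
  have hβα : ⟪β, α⟫ = 0 := by rwa [real_inner_comm]
  have hαα : ⟪α, α⟫ ≠ 0 := by rw [hlen α hα]; norm_num
  obtain ⟨γ, hγ, hγα, hγβ⟩ :=
    exists_inner_ne_zero_of_inner_eq_zero hrefl hirr hα hβ hαα hβα
  have hunit : ∀ ρ ∈ Φ, ∀ σ, ⟪ρ, σ⟫ = 0 → ⟪γ, σ⟫ ≠ 0 → ⟪γ, ρ⟫ ≠ 0 →
      ⟪γ, ρ⟫ = 1 ∨ ⟪γ, ρ⟫ = -1 := by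
    intro ρ hρ σ hρσ hγσ hγρ
    obtain ⟨n, hn⟩ := hint γ hγ ρ hρ
    refine inner_eq_one_or_neg_one (hlen γ hγ) (hlen ρ hρ) hn ?_ ?_ hγρ <;>
      rintro rfl <;> simp_all
  obtain ⟨γ₁, hγ₁, hγ₁α, hγ₁β⟩ :=
    exists_inner_eq_one hrefl hα hγ (hlen α hα) (hunit α hα β hαβ hγβ hγα)
  obtain ⟨γ₂, hγ₂, hγ₂β, hγ₂α⟩ := exists_inner_eq_one hrefl hβ hγ₁ (hlen β hβ)
    (hγ₁β β hαβ ▸ hunit β hβ α hβα hγα hγβ)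
  have hγ₂α' : ⟪γ₂, α⟫ = 1 := (hγ₂α α hβα).trans hγ₁α
  refine ⟨α, hα, β, hβ, γ₂, hγ₂, α + β - γ₂,
    add_sub_mem_of_inner_eq_one hrefl hα hβ hγ₂ hαβ hγ₂α' hγ₂β, rfl,
    add_sub_cancel γ₂ (α + β), fun h => ?_⟩
  have hγ₂_mem : γ₂ ∈ ({α, β} : Set V) := h ▸ Set.mem_insert γ₂ _
  rcases hγ₂_mem with rfl | rfl
  · exact one_ne_zero (hγ₂β.symm.trans hαβ)
  · exact one_ne_zero (hγ₂α'.symm.trans hβα)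

/-- In an irreducible simply laced root system, if `λ` is a sum of two
orthogonal roots then there are at least two distinct unordered pairs of
roots summing to `λ` (i.e. `n_λ ≥ 2`). -/
theorem at_least_two_pairs (V : Type*) [NormedAddCommGroup V]
    [InnerProductSpace ℝ V] [FiniteDimensional ℝ V]
    (Φ : Finset V)
    (h0 : (0 : V) ∉ Φ)
    (hlen : ∀ α ∈ Φ, ⟪α, α⟫ = 2)
    (hneg : ∀ α ∈ Φ, -α ∈ Φ)
    (hred : ∀ α ∈ Φ, ∀ t : ℝ, t • α ∈ Φ → t = 1 ∨ t = -1)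
    (hint : ∀ α ∈ Φ, ∀ β ∈ Φ, ∃ n : ℤ, ⟪α, β⟫ = n)
    (hrefl : ∀ α ∈ Φ, ∀ β ∈ Φ, β - ⟪β, α⟫ • α ∈ Φ)
    (hirr : ∀ S ⊆ Φ, (∀ a ∈ S, ∀ b ∈ Φ, b ∉ S → ⟪a, b⟫ = 0) → S = ∅ ∨ S = Φ)
    (lam : V) (hlam : ∃ α ∈ Φ, ∃ β ∈ Φ, ⟪α, β⟫ = 0 ∧ lam = α + β) :
    ∃ α ∈ Φ, ∃ β ∈ Φ, ∃ γ ∈ Φ, ∃ δ ∈ Φ,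
      α + β = lam ∧ γ + δ = lam ∧ ({α, β} : Set V) ≠ ({γ, δ} : Set V) :=
  at_least_two_pairs_general V Φ hlen hint hrefl hirr lam hlam
end

section
/- Let Φ be an irreducible simply laced root system. For each root α, the centralizer in the Weyl group W of the reflection s_α equals the subgroup generated by the reflections s_β for β = ±α or β ∈ Φ orthogonal to α. -/
/-!
Steinberg's argument. Choose `z` with `⟪z, β⟫ ≠ 0` for every root `β` and `⟪z, β⟫ > 0` whenever
`⟪α, β⟫ > 0`; call a root simple if it pairs positively with `z` and is not a sum of two such
roots. Since `s_{γ+η} = s_γ s_η s_γ` when `⟪γ + η, γ⟫ = 1`, every reflection, hence every element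
of `W`, is a product of simple reflections. If a shortest such word `w = s_{δ₁} ⋯ s_{δₙ}` fixes `α`,
the exchange condition gives `⟪z, w δₙ⟫ < 0`; since `⟪α, w δₙ⟫ = ⟪α, δₙ⟫` and `⟪z, δₙ⟫ > 0`, the
choice of `z` forces `⟪α, δₙ⟫ = 0`, and induction on `w s_{δₙ}` shows that the stabiliser of `α`
is generated by reflections orthogonal to `α`. Finally, `w` commutes with `s_α` iff `w α = ±α`.
-/

open scoped RealInnerProductSpace

structure SimplyLacedRootSystem (V : Type*) [NormedAddCommGroup V] [InnerProductSpace ℝ V] where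
  roots : Finset V
  refl : V → V ≃ₗ[ℝ] V
  inner_self_eq_two : ∀ β ∈ roots, ⟪β, β⟫ = 2
  exists_int_inner_eq : ∀ β ∈ roots, ∀ γ ∈ roots, ∃ n : ℤ, ⟪β, γ⟫ = n
  sub_inner_smul_mem : ∀ β ∈ roots, ∀ γ ∈ roots, γ - ⟪γ, β⟫ • β ∈ roots
  refl_apply : ∀ β ∈ roots, ∀ v : V, refl β v = v - ⟪v, β⟫ • β

namespace SimplyLacedRootSystem

variable {V : Type*} [NormedAddCommGroup V] [InnerProductSpace ℝ V]
  (R : SimplyLacedRootSystem V) {α β γ δ z : V}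

def weylGroup : Subgroup (V ≃ₗ[ℝ] V) :=
  Subgroup.closure {g | ∃ β ∈ R.roots, g = R.refl β}

def orthogonalWeylGroup (α : V) : Subgroup (V ≃ₗ[ℝ] V) :=
  Subgroup.closure {g | ∃ β ∈ R.roots, ⟪α, β⟫ = 0 ∧ g = R.refl β}

lemma ne_zero (hβ : β ∈ R.roots) : β ≠ 0 := by
  rintro rfl
  simpa using R.inner_self_eq_two 0 hβ

lemma refl_apply_mem (hβ : β ∈ R.roots) (hγ : γ ∈ R.roots) : R.refl β γ ∈ R.roots := by
  rw [R.refl_apply β hβ]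
  exact R.sub_inner_smul_mem β hβ γ hγ

lemma refl_apply_self (hβ : β ∈ R.roots) : R.refl β β = -β := by
  rw [R.refl_apply β hβ, R.inner_self_eq_two β hβ]
  module

lemma neg_mem (hβ : β ∈ R.roots) : -β ∈ R.roots :=
  R.refl_apply_self hβ ▸ R.refl_apply_mem hβ hβ

lemma refl_apply_of_inner_eq_zero (hβ : β ∈ R.roots) {v : V} (h : ⟪v, β⟫ = 0) :
    R.refl β v = v := by
  rw [R.refl_apply β hβ, h, zero_smul, sub_zero]

lemma inner_refl_refl (hβ : β ∈ R.roots) (u v : V) : ⟪R.refl β u, R.refl β v⟫ = ⟪u, v⟫ := by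
  simp only [R.refl_apply β hβ, inner_sub_left, inner_sub_right, real_inner_smul_left,
    real_inner_smul_right, R.inner_self_eq_two β hβ, real_inner_comm β u, real_inner_comm β v]
  ring

lemma refl_mul_self (hβ : β ∈ R.roots) : R.refl β * R.refl β = 1 := by
  ext v
  simp only [LinearEquiv.mul_apply, R.refl_apply β hβ, inner_sub_left, real_inner_smul_left,
    R.inner_self_eq_two β hβ, LinearEquiv.coe_one, id_eq]
  module

lemma refl_neg (hβ : β ∈ R.roots) : R.refl (-β) = R.refl β := by
  ext v
  simp [R.refl_apply β hβ, R.refl_apply (-β) (R.neg_mem hβ)]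

lemma commute_refl_of_inner_eq_zero (hβ : β ∈ R.roots) (hγ : γ ∈ R.roots) (h : ⟪β, γ⟫ = 0) :
    R.refl β * R.refl γ = R.refl γ * R.refl β := by
  ext v
  simp only [LinearEquiv.mul_apply, R.refl_apply β hβ, R.refl_apply γ hγ, inner_sub_left,
    real_inner_smul_left, h, real_inner_comm β γ]
  module

lemma mul_refl_eq {u : V ≃ₗ[ℝ] V} (hu : ∀ x y, ⟪u x, u y⟫ = ⟪x, y⟫) (hβ : β ∈ R.roots)
    (huβ : u β ∈ R.roots) : u * R.refl β = R.refl (u β) * u := by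
  ext v
  simp [R.refl_apply β hβ, R.refl_apply (u β) huβ, hu]

lemma one_le_inner_of_pos (hβ : β ∈ R.roots) (hγ : γ ∈ R.roots) (h : 0 < ⟪β, γ⟫) :
    1 ≤ ⟪β, γ⟫ := by
  obtain ⟨n, hn⟩ := R.exists_int_inner_eq β hβ γ hγ
  rw [hn] at h ⊢
  exact_mod_cast (show (0 : ℤ) < n by exact_mod_cast h)

lemma inner_eq_one_of_pos (hβ : β ∈ R.roots) (hγ : γ ∈ R.roots) (hne : β ≠ γ)
    (h : 0 < ⟪β, γ⟫) : ⟪β, γ⟫ = 1 := by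
  have hlt : ⟪β, γ⟫ < 2 := by
    have := real_inner_self_pos.2 (sub_ne_zero.2 hne)
    simp only [inner_sub_left, inner_sub_right, R.inner_self_eq_two β hβ,
      R.inner_self_eq_two γ hγ, real_inner_comm β γ] at this
    linarith
  obtain ⟨n, hn⟩ := R.exists_int_inner_eq β hβ γ hγ
  rw [hn] at h hlt ⊢
  have h0 : (0 : ℤ) < n := by exact_mod_cast h
  have h2 : n < 2 := by exact_mod_cast hlt
  rw [show n = 1 by omega, Int.cast_one]

lemma refl_eq_conj (hβ : β ∈ R.roots) (hγ : γ ∈ R.roots) (h : ⟪β, γ⟫ = 1) :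
    R.refl β = R.refl γ * R.refl (β - γ) * R.refl γ := by
  have hsγβ : R.refl γ β = β - γ := by rw [R.refl_apply γ hγ, h, one_smul]
  have := R.mul_refl_eq (R.inner_refl_refl hγ) hβ (R.refl_apply_mem hγ hβ)
  rw [hsγβ] at this
  rw [mul_assoc, ← this, ← mul_assoc, R.refl_mul_self hγ, one_mul]

def IsRegular (z : V) : Prop := ∀ β ∈ R.roots, ⟪z, β⟫ ≠ 0

def IsSimple (z δ : V) : Prop :=
  δ ∈ R.roots ∧ 0 < ⟪z, δ⟫ ∧
    ∀ γ ∈ R.roots, ∀ η ∈ R.roots, 0 < ⟪z, γ⟫ → 0 < ⟪z, η⟫ → γ + η ≠ δ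

/-- Not the usual height: a natural-number measure, strictly monotone in `⟪z, ·⟫` on roots. -/
noncomputable def height (z β : V) : ℕ :=
  (R.roots.filter fun γ => ⟪z, γ⟫ < ⟪z, β⟫).card

lemma height_lt_height (hγ : γ ∈ R.roots) (h : ⟪z, γ⟫ < ⟪z, β⟫) :
    R.height z γ < R.height z β := by
  refine Finset.card_lt_card ((Finset.ssubset_iff_of_subset ?_).2 ⟨γ, ?_, ?_⟩)
  · intro x hx
    simp only [Finset.mem_filter] at hx ⊢
    exact ⟨hx.1, hx.2.trans h⟩
  · exact Finset.mem_filter.2 ⟨hγ, h⟩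
  · simp

lemma inner_refl_apply_pos (hz : R.IsRegular z) (hδ : R.IsSimple z δ)
    (hγ : γ ∈ R.roots) (hpos : 0 < ⟪z, γ⟫) (hne : γ ≠ δ) : 0 < ⟪z, R.refl δ γ⟫ := by
  obtain ⟨hδ, hδpos, hδsimple⟩ := hδ
  rw [R.refl_apply δ hδ, inner_sub_right, real_inner_smul_right]
  rcases le_or_gt ⟪γ, δ⟫ 0 with hle | hgt
  · nlinarith
  rw [R.inner_eq_one_of_pos hγ hδ hne hgt, one_mul, sub_pos]
  by_contra! hle
  -- otherwise `δ = γ + (δ - γ)` is a sum of two positive roots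
  have hmem : δ - γ ∈ R.roots := by
    simpa [R.inner_eq_one_of_pos hγ hδ hne hgt, real_inner_comm] using
      R.sub_inner_smul_mem γ hγ δ hδ
  have hdiff : 0 < ⟪z, δ - γ⟫ := by
    have := hz _ hmem
    rw [inner_sub_right] at this ⊢
    exact lt_of_le_of_ne (by linarith) (Ne.symm this)
  exact hδsimple γ hγ (δ - γ) hmem hpos hdiff (add_sub_cancel γ δ)

def reflProd (l : List V) : V ≃ₗ[ℝ] V := (l.map R.refl).prod

@[simp] lemma reflProd_nil : R.reflProd [] = 1 := rfl

@[simp] lemma reflProd_cons (a : V) (l : List V) :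
    R.reflProd (a :: l) = R.refl a * R.reflProd l := by
  simp [reflProd]

@[simp] lemma reflProd_append (l₁ l₂ : List V) :
    R.reflProd (l₁ ++ l₂) = R.reflProd l₁ * R.reflProd l₂ := by
  simp [reflProd]

lemma inner_reflProd {l : List V} (hl : ∀ x ∈ l, x ∈ R.roots) (u v : V) :
    ⟪R.reflProd l u, R.reflProd l v⟫ = ⟪u, v⟫ := by
  induction l with
  | nil => rfl
  | cons a t ih =>
    simp only [List.forall_mem_cons] at hl
    simp [R.inner_refl_refl hl.1, ih hl.2]

lemma reflProd_apply_mem {l : List V} (hl : ∀ x ∈ l, x ∈ R.roots) (hγ : γ ∈ R.roots) :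
    R.reflProd l γ ∈ R.roots := by
  induction l with
  | nil => exact hγ
  | cons a t ih =>
    simp only [List.forall_mem_cons] at hl
    exact R.refl_apply_mem hl.1 (ih hl.2)

lemma inv_reflProd {l : List V} (hl : ∀ x ∈ l, x ∈ R.roots) :
    (R.reflProd l)⁻¹ = R.reflProd l.reverse := by
  induction l with
  | nil => rfl
  | cons a t ih =>
    simp only [List.forall_mem_cons] at hl
    simp [ih hl.2, inv_eq_of_mul_eq_one_right (R.refl_mul_self hl.1)]

lemma exists_reflProd_eq_refl_of_pos (hβ : β ∈ R.roots) (hpos : 0 < ⟪z, β⟫) :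
    ∃ l : List V, (∀ x ∈ l, R.IsSimple z x) ∧ R.reflProd l = R.refl β := by
  induction hn : R.height z β using Nat.strong_induction_on generalizing β with
  | _ n ih =>
  by_cases hsimple : R.IsSimple z β
  · exact ⟨[β], by simpa using hsimple, by simp⟩
  obtain ⟨γ, hγ, η, hη, hγpos, hηpos, rfl⟩ : ∃ γ ∈ R.roots, ∃ η ∈ R.roots,
      0 < ⟪z, γ⟫ ∧ 0 < ⟪z, η⟫ ∧ γ + η = β := by
    simpa [IsSimple, hβ, hpos] using hsimple
  -- `⟪γ + η, γ⟫ + ⟪γ + η, η⟫ = 2`, so one of the summands pairs positively with the sum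
  wlog hγβ : 0 < ⟪γ + η, γ⟫ generalizing γ η
  · have hsum : ⟪γ + η, γ⟫ + ⟪γ + η, η⟫ = 2 := by
      rw [← inner_add_right, R.inner_self_eq_two _ hβ]
    rw [add_comm] at hβ hpos hn hsimple ⊢
    exact this η hη γ hγ hηpos hγpos hβ hpos hn hsimple (by rw [add_comm]; linarith)
  have hne : γ + η ≠ γ := fun h => R.ne_zero hη (by simpa using h)
  have hsub : γ + η - γ = η := add_sub_cancel_left γ η
  obtain ⟨lγ, hlγ, hγ'⟩ := ih _ (hn ▸ R.height_lt_height hγ (by rw [inner_add_right]; linarith))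
    hγ hγpos rfl
  obtain ⟨lη, hlη, hη'⟩ := ih _ (hn ▸ R.height_lt_height hη (by rw [inner_add_right]; linarith))
    hη hηpos rfl
  refine ⟨lγ ++ lη ++ lγ, by simp_all [or_imp], ?_⟩
  rw [R.refl_eq_conj hβ hγ (R.inner_eq_one_of_pos hβ hγ hne hγβ), hsub]
  simp [hγ', hη', mul_assoc]

lemma exists_reflProd_eq_refl (hz : R.IsRegular z) (hβ : β ∈ R.roots) :
    ∃ l : List V, (∀ x ∈ l, R.IsSimple z x) ∧ R.reflProd l = R.refl β := by
  rcases (hz β hβ).lt_or_gt with hneg | hpos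
  · rw [← R.refl_neg hβ]
    exact R.exists_reflProd_eq_refl_of_pos (R.neg_mem hβ) (by rw [inner_neg_right]; linarith)
  · exact R.exists_reflProd_eq_refl_of_pos hβ hpos

lemma exists_reflProd_eq_of_mem_weylGroup (hz : R.IsRegular z)
    {w : V ≃ₗ[ℝ] V} (hw : w ∈ R.weylGroup) :
    ∃ l : List V, (∀ x ∈ l, R.IsSimple z x) ∧ R.reflProd l = w := by
  induction hw using Subgroup.closure_induction with
  | mem w hw =>
    obtain ⟨β, hβ, rfl⟩ := hw
    exact R.exists_reflProd_eq_refl hz hβ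
  | one => exact ⟨[], by simp, rfl⟩
  | mul u v _ _ hu hv =>
    obtain ⟨l₁, hl₁, rfl⟩ := hu
    obtain ⟨l₂, hl₂, rfl⟩ := hv
    exact ⟨l₁ ++ l₂, by simp_all [or_imp], by simp⟩
  | inv u _ hu =>
    obtain ⟨l, hl, rfl⟩ := hu
    exact ⟨l.reverse, by simpa using hl, (R.inv_reflProd fun x hx => (hl x hx).1).symm⟩

lemma inner_apply_apply_of_mem_weylGroup {w : V ≃ₗ[ℝ] V} (hw : w ∈ R.weylGroup) (u v : V) :
    ⟪w u, w v⟫ = ⟪u, v⟫ := by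
  induction hw using Subgroup.closure_induction generalizing u v with
  | mem w hw =>
    obtain ⟨β, hβ, rfl⟩ := hw
    exact R.inner_refl_refl hβ u v
  | one => rfl
  | mul w₁ w₂ _ _ h₁ h₂ => simp [h₁, h₂]
  | inv w _ h => simpa using (h (w⁻¹ u) (w⁻¹ v)).symm

lemma exists_reflProd_mul_refl_eq (hz : R.IsRegular z) {l : List V}
    (hl : ∀ x ∈ l, R.IsSimple z x) (hδ : R.IsSimple z δ) (hneg : ¬ 0 < ⟪z, R.reflProd l δ⟫) :
    ∃ l' : List V, (∀ x ∈ l', R.IsSimple z x) ∧ l'.length + 1 = l.length ∧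
      R.reflProd l * R.refl δ = R.reflProd l' := by
  induction l with
  | nil => exact absurd hδ.2.1 (by simpa using hneg)
  | cons a t ih =>
    simp only [List.forall_mem_cons] at hl
    have ht : ∀ x ∈ t, x ∈ R.roots := fun x hx => (hl.2 x hx).1
    by_cases hpos : 0 < ⟪z, R.reflProd t δ⟫
    · have hta : R.reflProd t δ = a := by
        by_contra hne
        exact hneg <| R.inner_refl_apply_pos hz hl.1 (R.reflProd_apply_mem ht hδ.1) hpos hne
      refine ⟨t, hl.2, rfl, ?_⟩
      rw [reflProd_cons, mul_assoc, R.mul_refl_eq (R.inner_reflProd ht) hδ.1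
        (R.reflProd_apply_mem ht hδ.1), hta, ← mul_assoc, R.refl_mul_self hl.1.1, one_mul]
    · obtain ⟨t', ht', hlen, heq⟩ := ih hl.2 hpos
      exact ⟨a :: t', List.forall_mem_cons.2 ⟨hl.1, ht'⟩, by simp [hlen],
        by rw [reflProd_cons, reflProd_cons, mul_assoc, heq]⟩

lemma inner_eq_zero_of_isSimple (hα : ∀ β ∈ R.roots, 0 < ⟪α, β⟫ → 0 < ⟪z, β⟫)
    {w : V ≃ₗ[ℝ] V} (hw : ∀ x y, ⟪w x, w y⟫ = ⟪x, y⟫) (hfix : w α = α)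
    (hδ : R.IsSimple z δ) (hwδ : w δ ∈ R.roots) (hneg : ⟪z, w δ⟫ < 0) : ⟪α, δ⟫ = 0 := by
  rcases lt_trichotomy ⟪α, δ⟫ 0 with hlt | heq | hgt
  · have := hα (-δ) (R.neg_mem hδ.1) (by rw [inner_neg_right]; linarith)
    rw [inner_neg_right] at this
    linarith [hδ.2.1]
  · exact heq
  · have := hα (w δ) hwδ (by rw [← hfix, hw]; exact hgt)
    linarith

lemma reflProd_mem_orthogonalWeylGroup (hz : R.IsRegular z)
    (hα : ∀ β ∈ R.roots, 0 < ⟪α, β⟫ → 0 < ⟪z, β⟫) {l : List V} (hl : ∀ x ∈ l, R.IsSimple z x)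
    (hfix : R.reflProd l α = α) :
    R.reflProd l ∈ R.orthogonalWeylGroup α := by
  induction hn : l.length using Nat.strong_induction_on generalizing l with
  | _ n ih =>
  by_cases hshort : ∃ l' : List V, (∀ x ∈ l', R.IsSimple z x) ∧ l'.length < n ∧
      R.reflProd l' = R.reflProd l
  · obtain ⟨l', hl', hlt, heq⟩ := hshort
    exact heq ▸ ih _ hlt hl' (heq ▸ hfix) rfl
  rcases l.eq_nil_or_concat' with rfl | ⟨t, δ, rfl⟩
  · exact one_mem _
  simp only [List.mem_append, List.mem_singleton, or_imp, forall_and, forall_eq] at hl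
  obtain ⟨ht, hδ⟩ := hl
  have htroots : ∀ x ∈ t, x ∈ R.roots := fun x hx => (ht x hx).1
  simp only [List.length_append, List.length_singleton] at hn
  simp only [reflProd_append, reflProd_cons, reflProd_nil, mul_one] at hfix hshort ⊢
  -- in a word of minimal length, the last letter `δ` is sent to a negative root
  have hpos : 0 < ⟪z, R.reflProd t δ⟫ := by
    by_contra hneg
    obtain ⟨t', ht', hlen, heq⟩ := R.exists_reflProd_mul_refl_eq hz ht hδ hneg
    exact hshort ⟨t', ht', by omega, heq.symm⟩
  have horth : ⟪α, δ⟫ = 0 := by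
    refine R.inner_eq_zero_of_isSimple hα
      (fun x y => by simp [R.inner_reflProd htroots, R.inner_refl_refl hδ.1]) hfix hδ
      (R.reflProd_apply_mem htroots (R.refl_apply_mem hδ.1 hδ.1)) ?_
    simpa [R.refl_apply_self hδ.1] using hpos
  rw [LinearEquiv.mul_apply, R.refl_apply_of_inner_eq_zero hδ.1 horth] at hfix
  exact mul_mem (ih t.length (by omega) ht hfix rfl)
    (Subgroup.subset_closure ⟨δ, hδ.1, horth, rfl⟩)

theorem mem_orthogonalWeylGroup_of_apply_eq_self (hz : R.IsRegular z)
    (hα : ∀ β ∈ R.roots, 0 < ⟪α, β⟫ → 0 < ⟪z, β⟫) {w : V ≃ₗ[ℝ] V} (hw : w ∈ R.weylGroup)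
    (hfix : w α = α) :
    w ∈ R.orthogonalWeylGroup α := by
  obtain ⟨l, hl, rfl⟩ := R.exists_reflProd_eq_of_mem_weylGroup hz hw
  exact R.reflProd_mem_orthogonalWeylGroup hz hα hl hfix

lemma apply_eq_or_eq_neg_of_commute (hα : α ∈ R.roots) {w : V ≃ₗ[ℝ] V}
    (hw : ∀ x y, ⟪w x, w y⟫ = ⟪x, y⟫) (h : w * R.refl α = R.refl α * w) :
    w α = α ∨ w α = -α := by
  set c := ⟪w α, α⟫
  have h2 : (2 : ℝ) • w α = c • α := by
    have := congr($h α)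
    simp only [LinearEquiv.mul_apply, R.refl_apply_self hα, map_neg, R.refl_apply α hα] at this
    rw [two_smul]
    linear_combination (norm := module) -this
  have hc : c ^ 2 = 2 ^ 2 := by
    have := congr(⟪$h2, w α⟫)
    simp only [real_inner_smul_left, hw, R.inner_self_eq_two α hα, real_inner_comm (w α) α]
      at this
    linear_combination -this
  rcases sq_eq_sq_iff_eq_or_eq_neg.1 hc with hc | hc
  · left
    exact smul_right_injective V two_ne_zero (h2.trans (by rw [hc]))
  · right
    exact smul_right_injective V two_ne_zero (h2.trans (by rw [hc]; module))

lemma exists_isRegular_and_pos_of_inner_pos (hα : α ∈ R.roots) :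
    ∃ z : V, R.IsRegular z ∧ ∀ β ∈ R.roots, 0 < ⟪α, β⟫ → 0 < ⟪z, β⟫ := by
  obtain ⟨z₀, hz₀⟩ := Module.Dual.exists_forall_ne_zero_of_forall_exists
    (fun β : R.roots => innerₛₗ ℝ (β : V))
    (fun β => ⟨β, by simpa using R.ne_zero β.2⟩)
  set t := 1 + ∑ β ∈ R.roots, |⟪z₀, β⟫|
  have ht : ∀ β ∈ R.roots, |⟪z₀, β⟫| < t := fun β hβ => by
    have := Finset.single_le_sum (f := fun β => |⟪z₀, β⟫|) (fun _ _ => abs_nonneg _) hβ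
    linarith
  have hpos : ∀ β ∈ R.roots, 0 < ⟪α, β⟫ → 0 < ⟪t • α + z₀, β⟫ := fun β hβ h => by
    have h1 := R.one_le_inner_of_pos hα hβ h
    have h2 := abs_lt.1 (ht β hβ)
    rw [inner_add_left, real_inner_smul_left]
    nlinarith
  refine ⟨t • α + z₀, fun β hβ => ?_, hpos⟩
  rcases lt_trichotomy ⟪α, β⟫ 0 with hlt | heq | hgt
  · have := hpos (-β) (R.neg_mem hβ) (by rw [inner_neg_right]; linarith)
    rw [inner_neg_right] at this
    linarith
  · rw [inner_add_left, real_inner_smul_left, heq, mul_zero, zero_add, real_inner_comm]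
    exact hz₀ ⟨β, hβ⟩
  · exact (hpos β hβ hgt).ne'

lemma mem_closure_of_commute (hα : α ∈ R.roots) {w : V ≃ₗ[ℝ] V} (hw : w ∈ R.weylGroup)
    (hcomm : w * R.refl α = R.refl α * w) :
    w ∈ Subgroup.closure
      {g | ∃ β ∈ R.roots, (β = α ∨ β = -α ∨ ⟪α, β⟫ = 0) ∧ g = R.refl β} := by
  obtain ⟨z, hz, hzα⟩ := R.exists_isRegular_and_pos_of_inner_pos hα
  have hstab : ∀ w ∈ R.weylGroup, w α = α → w ∈ Subgroup.closure
      {g | ∃ β ∈ R.roots, (β = α ∨ β = -α ∨ ⟪α, β⟫ = 0) ∧ g = R.refl β} := fun w hw hfix =>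
    Subgroup.closure_mono (by rintro _ ⟨β, hβ, h, rfl⟩; exact ⟨β, hβ, Or.inr (Or.inr h), rfl⟩)
      (R.mem_orthogonalWeylGroup_of_apply_eq_self hz hzα hw hfix)
  rcases R.apply_eq_or_eq_neg_of_commute hα (R.inner_apply_apply_of_mem_weylGroup hw) hcomm
    with hfix | hfix
  · exact hstab w hw hfix
  have hsα : R.refl α * w ∈ R.weylGroup := mul_mem (Subgroup.subset_closure ⟨α, hα, rfl⟩) hw
  have := hstab _ hsα (by rw [LinearEquiv.mul_apply, hfix, map_neg, R.refl_apply_self hα, neg_neg])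
  refine (Subgroup.mul_mem_cancel_left _ (Subgroup.subset_closure ?_)).1 this
  exact ⟨α, hα, Or.inl rfl, rfl⟩

lemma closure_le_weylGroup_inf_centralizer (hα : α ∈ R.roots) :
    Subgroup.closure {g | ∃ β ∈ R.roots, (β = α ∨ β = -α ∨ ⟪α, β⟫ = 0) ∧ g = R.refl β} ≤
      R.weylGroup ⊓ Subgroup.centralizer {R.refl α} := by
  rw [Subgroup.closure_le]
  rintro _ ⟨β, hβ, hβα, rfl⟩
  refine ⟨Subgroup.subset_closure ⟨β, hβ, rfl⟩, Subgroup.mem_centralizer_singleton_iff.2 ?_⟩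
  rcases hβα with rfl | rfl | horth
  · rfl
  · rw [R.refl_neg hα]
  · exact R.commute_refl_of_inner_eq_zero hβ hα (by rwa [real_inner_comm])

end SimplyLacedRootSystem

theorem centralizer_of_reflection_general (V : Type*) [NormedAddCommGroup V]
    [InnerProductSpace ℝ V]
    (Φ : Finset V)
    (hlen : ∀ α ∈ Φ, ⟪α, α⟫ = 2)
    (hint : ∀ α ∈ Φ, ∀ β ∈ Φ, ∃ n : ℤ, ⟪α, β⟫ = n)
    (hrefl : ∀ α ∈ Φ, ∀ β ∈ Φ, β - ⟪β, α⟫ • α ∈ Φ)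
    -- the reflections `s_β` for `β ∈ Φ`, as linear automorphisms of `V`
    (s : V → (V ≃ₗ[ℝ] V))
    (hs : ∀ β ∈ Φ, ∀ v : V, s β v = v - ⟪v, β⟫ • β)
    -- the Weyl group
    (W : Subgroup (V ≃ₗ[ℝ] V))
    (hW : W = Subgroup.closure {g : V ≃ₗ[ℝ] V | ∃ β ∈ Φ, g = s β})
    (α : V) (hα : α ∈ Φ) :
    {w : V ≃ₗ[ℝ] V | w ∈ W ∧ w * s α = s α * w}
      = ↑(Subgroup.closure
          {g : V ≃ₗ[ℝ] V | ∃ β ∈ Φ, (β = α ∨ β = -α ∨ ⟪α, β⟫ = 0) ∧ g = s β}) := by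
  subst hW
  let R : SimplyLacedRootSystem V := ⟨Φ, s, hlen, hint, hrefl, hs⟩
  ext w
  refine ⟨fun ⟨hw, hcomm⟩ => R.mem_closure_of_commute hα hw hcomm, fun hw => ?_⟩
  have hw' := R.closure_le_weylGroup_inf_centralizer hα hw
  exact ⟨hw'.1, Subgroup.mem_centralizer_singleton_iff.1 hw'.2⟩

/-- For an irreducible simply laced root system `Φ` with Weyl group `W`
(generated by the reflections `s_β(v) = v - κ(v,β)β` for `β ∈ Φ`), the
centralizer in `W` of the reflection `s_α` equals the subgroup generated by
the reflections `s_β` for `β = ±α` or `β ∈ Φ` orthogonal to `α`. -/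
theorem centralizer_of_reflection (V : Type*) [NormedAddCommGroup V]
    [InnerProductSpace ℝ V] [FiniteDimensional ℝ V]
    (Φ : Finset V)
    (h0 : (0 : V) ∉ Φ)
    (hlen : ∀ α ∈ Φ, ⟪α, α⟫ = 2)
    (hneg : ∀ α ∈ Φ, -α ∈ Φ)
    (hred : ∀ α ∈ Φ, ∀ t : ℝ, t • α ∈ Φ → t = 1 ∨ t = -1)
    (hint : ∀ α ∈ Φ, ∀ β ∈ Φ, ∃ n : ℤ, ⟪α, β⟫ = n)
    (hrefl : ∀ α ∈ Φ, ∀ β ∈ Φ, β - ⟪β, α⟫ • α ∈ Φ)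
    (hirr : ∀ S ⊆ Φ, (∀ a ∈ S, ∀ b ∈ Φ, b ∉ S → ⟪a, b⟫ = 0) → S = ∅ ∨ S = Φ)
    -- the reflections `s_β` for `β ∈ Φ`, as linear automorphisms of `V`
    (s : V → (V ≃ₗ[ℝ] V))
    (hs : ∀ β ∈ Φ, ∀ v : V, s β v = v - ⟪v, β⟫ • β)
    -- the Weyl group
    (W : Subgroup (V ≃ₗ[ℝ] V))
    (hW : W = Subgroup.closure {g : V ≃ₗ[ℝ] V | ∃ β ∈ Φ, g = s β})
    (α : V) (hα : α ∈ Φ) :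
    {w : V ≃ₗ[ℝ] V | w ∈ W ∧ w * s α = s α * w}
      = ↑(Subgroup.closure
          {g : V ≃ₗ[ℝ] V | ∃ β ∈ Φ, (β = α ∨ β = -α ∨ ⟪α, β⟫ = 0) ∧ g = s β}) :=
  centralizer_of_reflection_general V Φ hlen hint hrefl s hs W hW α hα
end

section
/- Let H be a Euclidean space containing a simply laced root system Φ (roots of squared length 2) and for each root α define j_α ∈ End(H) by j_α(h) = κ(h,α)α. Then under the Jordan product j • k = (jk+kj)/2 one has: j_α • j_β = 2j_α if α = ±β; j_α • j_β = 0 if κ(α,β) = 0; and j_α • j_β = (1/2)(j_α + j_β - j_{s_β(α)}) if κ(α,β) = ±1, where s_β(α) = α - κ(α,β)β. -/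
open scoped RealInnerProductSpace

section RankOneOperators

variable {V : Type*} [NormedAddCommGroup V] [InnerProductSpace ℝ V]
  {j : V → Module.End ℝ V}

theorem rankOne_mul_apply (hj : ∀ β v : V, j β v = ⟪v, β⟫ • β) (a b v : V) :
    (j a * j b) v = (⟪a, b⟫ * ⟪v, b⟫) • a := by
  rw [Module.End.mul_apply, hj, hj, real_inner_smul_left, real_inner_comm a b, mul_comm]

theorem rankOne_anticomm_apply (hj : ∀ β v : V, j β v = ⟪v, β⟫ • β) (a b v : V) :
    (j a * j b + j b * j a) v = ⟪a, b⟫ • (⟪v, b⟫ • a + ⟪v, a⟫ • b) := by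
  rw [LinearMap.add_apply, rankOne_mul_apply hj, rankOne_mul_apply hj, real_inner_comm b a,
    smul_add, smul_smul, smul_smul]

theorem rankOne_neg (hj : ∀ β v : V, j β v = ⟪v, β⟫ • β) (a : V) : j (-a) = j a := by
  ext v
  rw [hj, hj, inner_neg_right, neg_smul_neg]

theorem rankOne_mul_self (hj : ∀ β v : V, j β v = ⟪v, β⟫ • β) (a : V) :
    j a * j a = ⟪a, a⟫ • j a := by
  ext v
  rw [rankOne_mul_apply hj, LinearMap.smul_apply, hj, smul_smul]

theorem rankOne_anticomm_eq_zero (hj : ∀ β v : V, j β v = ⟪v, β⟫ • β) {a b : V}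
    (hab : ⟪a, b⟫ = 0) : j a * j b + j b * j a = 0 := by
  ext v
  rw [rankOne_anticomm_apply hj, hab, zero_smul, LinearMap.zero_apply]

/-- Expanding `j (a - c • b)` leaves `(1 - c ^ 2) • j b` plus `c` times the symmetrised
rank-one map `v ↦ ⟪v, b⟫ • a + ⟪v, a⟫ • b`, and `c` times that map is the anticommutator. -/
theorem rankOne_anticomm_eq_of_inner_sq_eq_one (hj : ∀ β v : V, j β v = ⟪v, β⟫ • β)
    {a b : V} (hab : ⟪a, b⟫ ^ 2 = 1) :
    j a * j b + j b * j a = j a + j b - j (a - ⟪a, b⟫ • b) := by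
  ext v
  rw [rankOne_anticomm_apply hj, LinearMap.sub_apply, LinearMap.add_apply, hj, hj, hj,
    inner_sub_right, real_inner_smul_right]
  match_scalars
  · ring
  · linear_combination ⟪v, b⟫ * hab

end RankOneOperators

theorem jordan_product_of_j_general (V : Type*) [NormedAddCommGroup V]
    [InnerProductSpace ℝ V]
    (Φ : Finset V)
    (hlen : ∀ α ∈ Φ, ⟪α, α⟫ = 2)
    (j : V → Module.End ℝ V)
    (hj : ∀ β v : V, j β v = ⟪v, β⟫ • β)
    (α β : V) (hα : α ∈ Φ) :
    ((β = α ∨ β = -α) →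
        (2⁻¹ : ℝ) • (j α * j β + j β * j α) = (2 : ℝ) • j α) ∧
    (⟪α, β⟫ = 0 →
        (2⁻¹ : ℝ) • (j α * j β + j β * j α) = 0) ∧
    ((⟪α, β⟫ = 1 ∨ ⟪α, β⟫ = -1) →
        (2⁻¹ : ℝ) • (j α * j β + j β * j α)
          = (2⁻¹ : ℝ) • (j α + j β - j (α - ⟪α, β⟫ • β))) := by
  refine ⟨fun hβα => ?_, fun hαβ => ?_, fun hαβ => ?_⟩
  · have hjβ : j β = j α := by
      rcases hβα with h | h <;> rw [h]
      exact rankOne_neg hj α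
    rw [hjβ, rankOne_mul_self hj, hlen α hα, ← two_smul ℝ, smul_smul, smul_smul]
    norm_num
  · rw [rankOne_anticomm_eq_zero hj hαβ, smul_zero]
  · have hsq : ⟪α, β⟫ ^ 2 = 1 := by rcases hαβ with h | h <;> rw [h] <;> norm_num
    rw [rankOne_anticomm_eq_of_inner_sq_eq_one hj hsq]

/-- For roots `α, β` of a simply laced root system (squared length 2) and the
rank-one symmetric operators `j_α(h) = κ(h,α)α`, under the Jordan product
`j • k = (jk+kj)/2` one has: `j_α • j_β = 2j_α` if `β = ±α`;
`j_α • j_β = 0` if `κ(α,β) = 0`; and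
`j_α • j_β = (1/2)(j_α + j_β - j_{s_β(α)})` if `κ(α,β) = ±1`,
where `s_β(α) = α - κ(α,β)β`. -/
theorem jordan_product_of_j (V : Type*) [NormedAddCommGroup V]
    [InnerProductSpace ℝ V] [FiniteDimensional ℝ V]
    (Φ : Finset V)
    (hlen : ∀ α ∈ Φ, ⟪α, α⟫ = 2)
    (j : V → Module.End ℝ V)
    (hj : ∀ β v : V, j β v = ⟪v, β⟫ • β)
    (α β : V) (hα : α ∈ Φ) (hβ : β ∈ Φ) :
    ((β = α ∨ β = -α) →
        (2⁻¹ : ℝ) • (j α * j β + j β * j α) = (2 : ℝ) • j α) ∧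
    (⟪α, β⟫ = 0 →
        (2⁻¹ : ℝ) • (j α * j β + j β * j α) = 0) ∧
    ((⟪α, β⟫ = 1 ∨ ⟪α, β⟫ = -1) →
        (2⁻¹ : ℝ) • (j α * j β + j β * j α)
          = (2⁻¹ : ℝ) • (j α + j β - j (α - ⟪α, β⟫ • β))) :=
  jordan_product_of_j_general V Φ hlen j hj α β hα
end

section
/- Let Φ be an irreducible simply laced root system in which every root β has exactly r positive roots α with κ(β,α) = ±1 (r independent of β by transitivity of the Weyl group). Then Σ_{α ∈ Φ⁺} j_α = ((4+r)/2)·id_H, where j_α(h) = κ(h,α)α. -/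
/-!
Fix a root `β` and put `w = ∑_{α ∈ Φ} κ(β, α) α`. The reflection `s_β` is an isometry permuting
`Φ`, so `s_β w = ∑_{α ∈ Φ} κ(s_β β, α) α = -w`; hence `w = (κ(w, β) / 2) β` with
`κ(w, β) = ∑_{α ∈ Φ} κ(β, α)²`. Integrality and Cauchy–Schwarz force `κ(β, α) ∈ {0, ±1, ±2}`,
with `±2` only for `α = ±β`, so the sum of squares over `Φ⁺` is `4 + r`. As `j_{-α} = j_α`, sums
over `Φ` are twice sums over `Φ⁺`, and the roots span `H`.
-/

open scoped RealInnerProductSpace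
open Finset

namespace Finset

theorem sum_eq_two_nsmul_sum_of_neg_mem_iff {V M : Type*} [InvolutiveNeg V]
    [AddCommMonoid M] {Φ Φp : Finset V} (hsub : Φp ⊆ Φ) (hneg : ∀ α ∈ Φ, -α ∈ Φ)
    (hsplit : ∀ α ∈ Φ, (α ∈ Φp ↔ -α ∉ Φp)) {F : V → M} (hF : ∀ α, F (-α) = F α) :
    ∑ α ∈ Φ, F α = 2 • ∑ α ∈ Φp, F α := by
  classical
  have hunion : Φp ∪ Φp.image Neg.neg = Φ := by
    refine union_subset hsub (image_subset_iff.2 fun α hα => hneg α (hsub hα))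
      |>.antisymm fun α hα => ?_
    by_cases h : α ∈ Φp
    · exact mem_union_left _ h
    · exact mem_union_right _
        (mem_image.2 ⟨-α, not_not.1 (mt (hsplit α hα).2 h), neg_neg α⟩)
  have hdisj : Disjoint Φp (Φp.image Neg.neg) := by
    refine disjoint_left.2 fun α hα hα' => ?_
    obtain ⟨a, ha, rfl⟩ := mem_image.1 hα'
    exact (hsplit a (hsub ha)).1 ha hα
  rw [← hunion, sum_union hdisj, sum_image fun _ _ _ _ h => neg_injective h, two_nsmul]
  simp only [hF]

theorem card_filter_eq_or_eq_neg_eq_one {V : Type*} [InvolutiveNeg V] [DecidableEq V]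
    {Φ Φp : Finset V} (hsplit : ∀ α ∈ Φ, (α ∈ Φp ↔ -α ∉ Φp)) {β : V} (hβ : β ∈ Φ) :
    #{α ∈ Φp | α = β ∨ α = -β} = 1 := by
  rw [card_eq_one]
  by_cases h : β ∈ Φp
  · refine ⟨β, ext fun α => ?_⟩
    have hnegβ := (hsplit β hβ).1 h
    simp only [mem_filter, mem_singleton]
    constructor
    · rintro ⟨hα, rfl | rfl⟩ <;> trivial
    · rintro rfl; exact ⟨h, Or.inl rfl⟩
  · refine ⟨-β, ext fun α => ?_⟩
    have hnegβ := not_not.1 (mt (hsplit β hβ).2 h)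
    simp only [mem_filter, mem_singleton]
    constructor
    · rintro ⟨hα, rfl | rfl⟩ <;> trivial
    · rintro rfl; exact ⟨hnegβ, Or.inr rfl⟩

end Finset

section
variable {V : Type*} [NormedAddCommGroup V] [InnerProductSpace ℝ V]

theorem inner_eq_two_iff_of_inner_self_eq_two {α β : V} (hα : ⟪α, α⟫ = 2) (hβ : ⟪β, β⟫ = 2) :
    ⟪β, α⟫ = 2 ↔ α = β := by
  refine ⟨fun h => ?_, fun h => h ▸ hβ⟩
  rw [← sub_eq_zero, ← inner_self_eq_zero (𝕜 := ℝ), inner_sub_left, inner_sub_right,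
    inner_sub_right, real_inner_comm β α]
  linarith

theorem inner_eq_neg_two_iff_of_inner_self_eq_two {α β : V} (hα : ⟪α, α⟫ = 2)
    (hβ : ⟪β, β⟫ = 2) : ⟪β, α⟫ = -2 ↔ α = -β := by
  have := inner_eq_two_iff_of_inner_self_eq_two (α := -α) (by simpa using hα) hβ
  rwa [inner_neg_right, neg_eq_iff_eq_neg, neg_eq_iff_eq_neg] at this

theorem sq_inner_eq_of_inner_eq_intCast [DecidableEq V] {α β : V} (hα : ⟪α, α⟫ = 2)
    (hβ : ⟪β, β⟫ = 2) {n : ℤ} (hn : ⟪β, α⟫ = n) :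
    ⟪β, α⟫ ^ 2 =
      (if α = β ∨ α = -β then 4 else 0) + if ⟪β, α⟫ = 1 ∨ ⟪β, α⟫ = -1 then 1 else 0 := by
  simp only [← inner_eq_two_iff_of_inner_self_eq_two hα hβ,
    ← inner_eq_neg_two_iff_of_inner_self_eq_two hα hβ, hn]
  have hcs := real_inner_mul_inner_self_le β α
  rw [hn, hα, hβ] at hcs
  have : n * n ≤ 2 * 2 := by exact_mod_cast hcs
  have hlo : -2 ≤ n := by nlinarith
  have hhi : n ≤ 2 := by nlinarith
  interval_cases n <;> norm_num

theorem reflection_orthogonal_singleton_apply_of_inner_self_eq_two {β : V} (hβ : ⟪β, β⟫ = 2)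
    (v : V) : (ℝ ∙ β)ᗮ.reflection v = v - ⟪v, β⟫ • β := by
  rw [Submodule.reflection_orthogonal_apply, Submodule.reflection_singleton_apply,
    RCLike.ofReal_real_eq_id, id, ← real_inner_self_eq_norm_sq, hβ, real_inner_comm]
  module

theorem LinearIsometryEquiv.sum_inner_smul_map_of_mapsTo {Φ : Finset V} (g : V ≃ₗᵢ[ℝ] V)
    (hg : Set.MapsTo g Φ Φ) (v : V) :
    ∑ α ∈ Φ, ⟪g v, α⟫ • α = g (∑ α ∈ Φ, ⟪v, α⟫ • α) := by
  classical
  have himage : Φ.image g = Φ :=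
    eq_of_subset_of_card_le (image_subset_iff.2 hg)
      (card_image_of_injective Φ g.injective).ge
  calc ∑ α ∈ Φ, ⟪g v, α⟫ • α = ∑ α ∈ Φ.image g, ⟪g v, α⟫ • α := by rw [himage]
    _ = ∑ α ∈ Φ, ⟪v, α⟫ • g α := by
      simp only [sum_image fun _ _ _ _ h => g.injective h, LinearIsometryEquiv.inner_map_map]
    _ = g (∑ α ∈ Φ, ⟪v, α⟫ • α) := by simp only [map_sum, map_smul]

theorem two_smul_sum_inner_smul_eq_sum_sq_inner_smul {Φ : Finset V} {β : V} (hβ : ⟪β, β⟫ = 2)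
    (hΦ : ∀ α ∈ Φ, α - ⟪α, β⟫ • β ∈ Φ) :
    (2 : ℝ) • ∑ α ∈ Φ, ⟪β, α⟫ • α = (∑ α ∈ Φ, ⟪β, α⟫ ^ 2) • β := by
  set s := (ℝ ∙ β)ᗮ.reflection
  have hs := reflection_orthogonal_singleton_apply_of_inner_self_eq_two hβ
  have hmaps : Set.MapsTo s Φ Φ := fun α hα => by simpa only [s, hs, mem_coe] using hΦ α hα
  have key := s.sum_inner_smul_map_of_mapsTo hmaps β
  rw [Submodule.reflection_orthogonalComplement_singleton_eq_neg, hs, real_inner_comm, inner_sum]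
    at key
  simp only [inner_neg_left, neg_smul, sum_neg_distrib, real_inner_smul_right, ← sq] at key
  rw [two_smul]
  linear_combination (norm := module) -key

theorem sum_sq_inner_eq_four_add_card [DecidableEq V] {Φ Φp : Finset V}
    (hlen : ∀ α ∈ Φ, ⟪α, α⟫ = 2) (hint : ∀ α ∈ Φ, ∀ β ∈ Φ, ∃ n : ℤ, ⟪α, β⟫ = n)
    (hsub : Φp ⊆ Φ) (hsplit : ∀ α ∈ Φ, (α ∈ Φp ↔ -α ∉ Φp)) {β : V} (hβ : β ∈ Φ) :
    ∑ α ∈ Φp, ⟪β, α⟫ ^ 2 = 4 + #{α ∈ Φp | ⟪β, α⟫ = 1 ∨ ⟪β, α⟫ = -1} := by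
  rw [sum_congr rfl fun α hα => sq_inner_eq_of_inner_eq_intCast (hlen α (hsub hα))
    (hlen β hβ) (hint β hβ α (hsub hα)).choose_spec]
  simp only [sum_add_distrib, sum_ite, sum_const, nsmul_eq_mul,
    card_filter_eq_or_eq_neg_eq_one hsplit hβ]
  ring

end

theorem sum_j_positive_roots_general (V : Type*) [NormedAddCommGroup V]
    [InnerProductSpace ℝ V]
    (Φ : Finset V)
    (hlen : ∀ α ∈ Φ, ⟪α, α⟫ = 2)
    (hneg : ∀ α ∈ Φ, -α ∈ Φ)
    (hint : ∀ α ∈ Φ, ∀ β ∈ Φ, ∃ n : ℤ, ⟪α, β⟫ = n)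
    (hrefl : ∀ α ∈ Φ, ∀ β ∈ Φ, β - ⟪β, α⟫ • α ∈ Φ)
    (hspan : Submodule.span ℝ (↑Φ : Set V) = ⊤)
    (Φp : Finset V) (hsub : Φp ⊆ Φ)
    (hsplit : ∀ α ∈ Φ, (α ∈ Φp ↔ -α ∉ Φp))
    (j : V → Module.End ℝ V)
    (hj : ∀ β v : V, j β v = ⟪v, β⟫ • β)
    (r : ℕ)
    (hr : ∀ β ∈ Φ,
      {α : V | α ∈ Φp ∧ (⟪β, α⟫ = 1 ∨ ⟪β, α⟫ = -1)}.ncard = r) :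
    ∑ α ∈ Φp, j α = (((4 : ℝ) + r) / 2) • (1 : Module.End ℝ V) := by
  classical
  refine LinearMap.ext_on hspan fun β hβ => ?_
  have hcard : #{α ∈ Φp | ⟪β, α⟫ = 1 ∨ ⟪β, α⟫ = -1} = r := by
    rw [← Set.ncard_coe_finset, coe_filter]
    exact hr β hβ
  have hdouble : ∑ α ∈ Φ, ⟪β, α⟫ • α = 2 • ∑ α ∈ Φp, ⟪β, α⟫ • α :=
    sum_eq_two_nsmul_sum_of_neg_mem_iff hsub hneg hsplit fun α => by simp
  have hsq : ∑ α ∈ Φ, ⟪β, α⟫ ^ 2 = 2 * (4 + r) := by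
    rw [sum_eq_two_nsmul_sum_of_neg_mem_iff hsub hneg hsplit fun α => by simp,
      sum_sq_inner_eq_four_add_card hlen hint hsub hsplit hβ, hcard, nsmul_eq_mul, Nat.cast_ofNat]
  have key := two_smul_sum_inner_smul_eq_sum_sq_inner_smul (hlen β hβ) (hrefl β hβ)
  rw [hdouble, hsq] at key
  simp only [LinearMap.coe_sum, Finset.sum_apply, hj, LinearMap.smul_apply, Module.End.one_apply]
  apply smul_right_injective V (four_ne_zero : (4 : ℝ) ≠ 0)
  linear_combination (norm := module) key

/-- Let `Φ` be an irreducible simply laced root system spanning `H`, with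
positive system `Φ⁺`, and suppose every root `β` has exactly `r` positive
roots `α` with `κ(β,α) = ±1`. Then `Σ_{α ∈ Φ⁺} j_α = ((4+r)/2)·id_H`, where
`j_α(h) = κ(h,α)α`. -/
theorem sum_j_positive_roots (V : Type*) [NormedAddCommGroup V]
    [InnerProductSpace ℝ V] [FiniteDimensional ℝ V]
    (Φ : Finset V)
    (h0 : (0 : V) ∉ Φ)
    (hlen : ∀ α ∈ Φ, ⟪α, α⟫ = 2)
    (hneg : ∀ α ∈ Φ, -α ∈ Φ)
    (hred : ∀ α ∈ Φ, ∀ t : ℝ, t • α ∈ Φ → t = 1 ∨ t = -1)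
    (hint : ∀ α ∈ Φ, ∀ β ∈ Φ, ∃ n : ℤ, ⟪α, β⟫ = n)
    (hrefl : ∀ α ∈ Φ, ∀ β ∈ Φ, β - ⟪β, α⟫ • α ∈ Φ)
    (hirr : ∀ S ⊆ Φ, (∀ a ∈ S, ∀ b ∈ Φ, b ∉ S → ⟪a, b⟫ = 0) → S = ∅ ∨ S = Φ)
    (hspan : Submodule.span ℝ (↑Φ : Set V) = ⊤)
    (Φp : Finset V) (hsub : Φp ⊆ Φ)
    (hsplit : ∀ α ∈ Φ, (α ∈ Φp ↔ -α ∉ Φp))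
    (hclosed : ∀ α ∈ Φp, ∀ β ∈ Φp, α + β ∈ Φ → α + β ∈ Φp)
    (j : V → Module.End ℝ V)
    (hj : ∀ β v : V, j β v = ⟪v, β⟫ • β)
    (r : ℕ)
    (hr : ∀ β ∈ Φ,
      {α : V | α ∈ Φp ∧ (⟪β, α⟫ = 1 ∨ ⟪β, α⟫ = -1)}.ncard = r) :
    ∑ α ∈ Φp, j α = (((4 : ℝ) + r) / 2) • (1 : Module.End ℝ V) :=
  sum_j_positive_roots_general V Φ hlen hneg hint hrefl hspan Φp hsub hsplit j hj r hr
end
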